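/- With the setup of FreeMerge, the output Z = (w₁ᶻ, z₁, …, w_{m+n}ᶻ, z_{m+n}) satisfies the weight-partition property: for each 1 ≤ i ≤ m, if z_a = x_i and z_b = x_{i+1}, then w_{i+1}ˣ = Σ_{j=a+1}^{b} w_jᶻ; moreover w₁ˣ = Σ_{j=1}^{k} w_jᶻ where z_k = x₁; and the analogous statements hold for Y. -/

import Mathlib

/-!
Write `cumWeight L u` for the total weight of `L` up to and including the label `u`.
Each step of `freeMerge` emits the smaller leading weight `d` and subtracts `d` from the other
leading weight, so it shifts the cumulative weight of every pending label of both inputs by the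
same `d`. By induction, the cumulative weight in the output of every label of `X` is its
cumulative weight in `X`, and likewise for `Y`. Since labels of `X` keep their order in the
output, the weight of `x_{i+1}` is the difference of two such cumulative weights, which is the
total output weight strictly after `x_i` up to `x_{i+1}`.
-/

noncomputable def freeMerge {α : Type*} : List (ℝ × α) → List (ℝ × α) → List (ℝ × α)
  | [], Y => Y
  | X, [] => X
  | (wx, x) :: X, (wy, y) :: Y =>
      if wx < wy then (wx, x) :: freeMerge X ((wy - wx, y) :: Y)
      else (wy, y) :: freeMerge ((wx - wy, x) :: X) Y
termination_by X Y => X.length + Y.length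
decreasing_by all_goals simp

open Set

theorem List.Sublist.idxOf_lt_idxOf {β : Type*} [DecidableEq β] {l L : List β}
    (h : l.Sublist L) (hL : L.Nodup) {i j : ℕ} (hij : i < j) (hj : j < l.length) :
    L.idxOf l[i] < L.idxOf l[j] := by
  have hpair : L.Pairwise (fun u v => L.idxOf u < L.idxOf v) :=
    List.pairwise_iff_getElem.mpr fun i j hi hj hij => by
      rwa [hL.idxOf_getElem, hL.idxOf_getElem]
  exact List.pairwise_iff_getElem.mp (hpair.sublist h) i j (hij.trans hj) hj hij

section CumWeight

variable {M α : Type*} [DecidableEq α]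

def cumWeight [AddMonoid M] (L : List (M × α)) (u : α) : M :=
  ((L.map Prod.fst).take ((L.map Prod.snd).idxOf u + 1)).sum

theorem cumWeight_cons [AddMonoid M] (w : M) (a : α) (L : List (M × α)) (u : α) :
    cumWeight ((w, a) :: L) u = w + if a = u then 0 else cumWeight L u := by
  by_cases hau : a = u
  · subst hau
    simp [cumWeight]
  · simp [cumWeight, List.idxOf_cons_ne _ hau, hau]

theorem cumWeight_getElem [AddMonoid M] {L : List (M × α)} (hL : (L.map Prod.snd).Nodup)
    (k : ℕ) (hk : k < (L.map Prod.snd).length) :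
    cumWeight L (L.map Prod.snd)[k] = ((L.map Prod.fst).take (k + 1)).sum := by
  rw [cumWeight, hL.idxOf_getElem]

theorem Set.EqOn.cumWeight_cons [AddMonoid M] {Z L : List (M × α)}
    (h : EqOn (cumWeight Z) (cumWeight L) {u | u ∈ L.map Prod.snd}) (w : M) (a : α) :
    EqOn (cumWeight ((w, a) :: Z)) (cumWeight ((w, a) :: L))
      {u | u ∈ ((w, a) :: L).map Prod.snd} := by
  intro u hu
  simp only [_root_.cumWeight_cons]
  split_ifs with hau
  · rfl
  · exact congrArg (w + ·) (h (by simpa [Ne.symm hau] using hu))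

theorem Set.EqOn.cumWeight_cons_of_sub [AddCommGroup M] {Z L : List (M × α)} {w d : M} {a b : α}
    (h : EqOn (cumWeight Z) (cumWeight ((w - d, a) :: L))
      {u | u ∈ ((w - d, a) :: L).map Prod.snd})
    (hb : b ∉ ((w, a) :: L).map Prod.snd) :
    EqOn (cumWeight ((d, b) :: Z)) (cumWeight ((w, a) :: L))
      {u | u ∈ ((w, a) :: L).map Prod.snd} := by
  intro u hu
  have hbu : b ≠ u := fun hbu => hb (hbu ▸ hu)
  rw [_root_.cumWeight_cons, if_neg hbu, h (by simpa using hu), _root_.cumWeight_cons,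
    _root_.cumWeight_cons]
  abel

theorem sum_take_fst_eq_of_eqOn_cumWeight [AddMonoid M] {Z L : List (M × α)}
    (hZ : (Z.map Prod.snd).Nodup) (hL : (L.map Prod.snd).Nodup)
    (h : EqOn (cumWeight Z) (cumWeight L) {u | u ∈ L.map Prod.snd}) {k i : ℕ}
    (hk : k < (Z.map Prod.snd).length) (hi : i < (L.map Prod.snd).length)
    (heq : (Z.map Prod.snd)[k] = (L.map Prod.snd)[i]) :
    ((Z.map Prod.fst).take (k + 1)).sum = ((L.map Prod.fst).take (i + 1)).sum := by
  rw [← cumWeight_getElem hZ k hk, ← cumWeight_getElem hL i hi, heq, h (List.getElem_mem hi)]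

theorem fst_getElem_zero_eq_sum_take_of_eqOn_cumWeight [AddMonoid M] {Z L : List (M × α)}
    (hZ : (Z.map Prod.snd).Nodup) (hL : (L.map Prod.snd).Nodup)
    (h : EqOn (cumWeight Z) (cumWeight L) {u | u ∈ L.map Prod.snd}) (k : ℕ)
    (hk : k < (Z.map Prod.snd).length) (h0 : 0 < (L.map Prod.snd).length)
    (heq : (Z.map Prod.snd)[k] = (L.map Prod.snd)[0]) :
    (L.map Prod.fst)[0]'(by simpa using h0) = ((Z.map Prod.fst).take (k + 1)).sum := by
  rw [sum_take_fst_eq_of_eqOn_cumWeight hZ hL h hk h0 heq,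
    List.sum_take_succ _ 0 (by simpa using h0)]
  simp

theorem fst_getElem_succ_eq_sum_drop_take_of_eqOn_cumWeight [AddLeftCancelMonoid M]
    {Z L : List (M × α)} (hZ : (Z.map Prod.snd).Nodup) (hL : (L.map Prod.snd).Nodup)
    (hsub : (L.map Prod.snd).Sublist (Z.map Prod.snd))
    (h : EqOn (cumWeight Z) (cumWeight L) {u | u ∈ L.map Prod.snd}) (i a b : ℕ)
    (hi : i + 1 < (L.map Prod.snd).length) (ha : a < (Z.map Prod.snd).length)
    (hb : b < (Z.map Prod.snd).length)
    (hza : (Z.map Prod.snd)[a] = (L.map Prod.snd)[i])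
    (hzb : (Z.map Prod.snd)[b] = (L.map Prod.snd)[i + 1]) :
    (L.map Prod.fst)[i + 1]'(by simpa using hi) =
      (((Z.map Prod.fst).drop (a + 1)).take (b - a)).sum := by
  have hab : a < b := by
    have hidx := hsub.idxOf_lt_idxOf hZ (Nat.lt_succ_self i) hi
    rwa [← hza, ← hzb, hZ.idxOf_getElem, hZ.idxOf_getElem] at hidx
  have hsplit : ((Z.map Prod.fst).take (b + 1)).sum = ((Z.map Prod.fst).take (a + 1)).sum +
      (((Z.map Prod.fst).drop (a + 1)).take (b - a)).sum := by
    rw [show b + 1 = a + 1 + (b - a) by omega, List.take_add, List.sum_append]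
  rw [sum_take_fst_eq_of_eqOn_cumWeight hZ hL h hb hi hzb,
    sum_take_fst_eq_of_eqOn_cumWeight hZ hL h ha (Nat.lt_of_succ_lt hi) hza,
    List.sum_take_succ _ (i + 1) (by simpa using hi)] at hsplit
  exact add_left_cancel hsplit

end CumWeight

theorem freeMerge_nil_right {α : Type*} (X : List (ℝ × α)) : freeMerge X [] = X := by
  cases X <;> simp [freeMerge]

theorem freeMerge_perm {α : Type*} (X Y : List (ℝ × α)) :
    ((freeMerge X Y).map Prod.snd).Perm (X.map Prod.snd ++ Y.map Prod.snd) := by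
  induction X, Y using freeMerge.induct with
  | case1 Y => simp [freeMerge]
  | case2 X _ => simp [freeMerge_nil_right]
  | case3 wx x X wy y Y hlt ih =>
    rw [freeMerge, if_pos hlt]
    simpa using ih.cons x
  | case4 wx x X wy y Y hlt ih =>
    rw [freeMerge, if_neg hlt]
    simpa using (ih.cons y).trans List.perm_middle.symm

theorem freeMerge_sublist_left {α : Type*} (X Y : List (ℝ × α)) :
    (X.map Prod.snd).Sublist ((freeMerge X Y).map Prod.snd) := by
  induction X, Y using freeMerge.induct with
  | case1 Y => simp [freeMerge]
  | case2 X _ => simp [freeMerge_nil_right]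
  | case3 wx x X wy y Y hlt ih =>
    rw [freeMerge, if_pos hlt]
    simpa using ih.cons_cons x
  | case4 wx x X wy y Y hlt ih =>
    rw [freeMerge, if_neg hlt]
    simpa using ih.cons y

theorem freeMerge_sublist_right {α : Type*} (X Y : List (ℝ × α)) :
    (Y.map Prod.snd).Sublist ((freeMerge X Y).map Prod.snd) := by
  induction X, Y using freeMerge.induct with
  | case1 Y => simp [freeMerge]
  | case2 X _ => simp [freeMerge_nil_right]
  | case3 wx x X wy y Y hlt ih =>
    rw [freeMerge, if_pos hlt]
    simpa using ih.cons x
  | case4 wx x X wy y Y hlt ih =>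
    rw [freeMerge, if_neg hlt]
    simpa using ih.cons_cons y

theorem eqOn_cumWeight_freeMerge {α : Type*} [DecidableEq α] (X Y : List (ℝ × α))
    (hXY : (X.map Prod.snd).Disjoint (Y.map Prod.snd)) :
    EqOn (cumWeight (freeMerge X Y)) (cumWeight X) {u | u ∈ X.map Prod.snd} ∧
      EqOn (cumWeight (freeMerge X Y)) (cumWeight Y) {u | u ∈ Y.map Prod.snd} := by
  induction X, Y using freeMerge.induct with
  | case1 Y => simp [freeMerge, eqOn_refl]
  | case2 X _ => simp [freeMerge_nil_right, eqOn_refl]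
  | case3 wx x X wy y Y hlt ih =>
    rw [freeMerge, if_pos hlt]
    obtain ⟨hx, hXY'⟩ := List.disjoint_cons_left.mp hXY
    obtain ⟨ihX, ihY⟩ := ih (by simpa using hXY')
    exact ⟨ihX.cumWeight_cons wx x, ihY.cumWeight_cons_of_sub hx⟩
  | case4 wx x X wy y Y hlt ih =>
    rw [freeMerge, if_neg hlt]
    obtain ⟨hy, hXY'⟩ := List.disjoint_cons_right.mp hXY
    obtain ⟨ihX, ihY⟩ := ih (by simpa using hXY')
    exact ⟨ihX.cumWeight_cons_of_sub hy, ihY.cumWeight_cons wy y⟩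

/-- weight-partition property of `freeMerge`.  For each `i`, if
`z_a = x_i` and `z_b = x_{i+1}` then `w_{i+1}^X = Σ_{j=a+1}^{b} w_j^Z`; moreover
`w_1^X = Σ_{j=1}^{k} w_j^Z` where `z_k = x_1`; and the analogous statements hold for `Y`. -/
theorem freeMerge_weights {α : Type*} (X Y : List (ℝ × α))
    (hnX : (X.map Prod.snd).Nodup) (hnY : (Y.map Prod.snd).Nodup)
    (hdisj : ∀ a, a ∈ X.map Prod.snd → a ∉ Y.map Prod.snd) :
    (∀ (k : ℕ) (hk : k < ((freeMerge X Y).map Prod.snd).length)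
        (h0 : 0 < (X.map Prod.snd).length),
      ((freeMerge X Y).map Prod.snd)[k] = (X.map Prod.snd)[0] →
      (X.map Prod.fst)[0]'(by simpa using h0) =
        (((freeMerge X Y).map Prod.fst).take (k + 1)).sum) ∧
    (∀ (i a b : ℕ) (hi : i + 1 < (X.map Prod.snd).length)
        (ha : a < ((freeMerge X Y).map Prod.snd).length)
        (hb : b < ((freeMerge X Y).map Prod.snd).length),
      ((freeMerge X Y).map Prod.snd)[a] = (X.map Prod.snd)[i]'(Nat.lt_of_succ_lt hi) →
      ((freeMerge X Y).map Prod.snd)[b] = (X.map Prod.snd)[i + 1] →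
      (X.map Prod.fst)[i + 1]'(by simpa using hi) =
        ((((freeMerge X Y).map Prod.fst).drop (a + 1)).take (b - a)).sum) ∧
    (∀ (k : ℕ) (hk : k < ((freeMerge X Y).map Prod.snd).length)
        (h0 : 0 < (Y.map Prod.snd).length),
      ((freeMerge X Y).map Prod.snd)[k] = (Y.map Prod.snd)[0] →
      (Y.map Prod.fst)[0]'(by simpa using h0) =
        (((freeMerge X Y).map Prod.fst).take (k + 1)).sum) ∧
    (∀ (i a b : ℕ) (hi : i + 1 < (Y.map Prod.snd).length)
        (ha : a < ((freeMerge X Y).map Prod.snd).length)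
        (hb : b < ((freeMerge X Y).map Prod.snd).length),
      ((freeMerge X Y).map Prod.snd)[a] = (Y.map Prod.snd)[i]'(Nat.lt_of_succ_lt hi) →
      ((freeMerge X Y).map Prod.snd)[b] = (Y.map Prod.snd)[i + 1] →
      (Y.map Prod.fst)[i + 1]'(by simpa using hi) =
        ((((freeMerge X Y).map Prod.fst).drop (a + 1)).take (b - a)).sum) := by
  classical
  have hXY : (X.map Prod.snd).Disjoint (Y.map Prod.snd) := fun a ha hb => hdisj a ha hb
  have hZ : ((freeMerge X Y).map Prod.snd).Nodup :=
    (freeMerge_perm X Y).nodup_iff.mpr (hnX.append hnY hXY)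
  obtain ⟨hX, hY⟩ := eqOn_cumWeight_freeMerge X Y hXY
  exact ⟨fst_getElem_zero_eq_sum_take_of_eqOn_cumWeight hZ hnX hX,
    fst_getElem_succ_eq_sum_drop_take_of_eqOn_cumWeight hZ hnX (freeMerge_sublist_left X Y) hX,
    fst_getElem_zero_eq_sum_take_of_eqOn_cumWeight hZ hnY hY,
    fst_getElem_succ_eq_sum_drop_take_of_eqOn_cumWeight hZ hnY (freeMerge_sublist_right X Y) hY⟩
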